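/- Let μ : ℝ → ℝ be continuous, let ψ : ℝ → ℝ be twice continuously differentiable with ψ''(x) = (μ(x)/4)·ψ(x) for all x, and let f : ℝ → ℝ be smooth with f'(x) > 0 for all x. Define φ(x) := f'(x)^{−1/2}·ψ(f(x)). Then φ''(x) = (μ_f(x)/4)·φ(x) for all x, where μ_f(x) := f'(x)²·μ(f(x)) − 2·S(f)(x). -/

import Mathlib

open Real
open scoped ContDiff

/-- The Schwarzian derivative `S(f) = f'''/f' − (3/2)(f''/f')²`. -/
noncomputable def schwarzian (f : ℝ → ℝ) (x : ℝ) : ℝ :=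
  deriv (deriv (deriv f)) x / deriv f x -
    (3 / 2) * (deriv (deriv f) x / deriv f x) ^ 2

lemma alg1 (P Q c d s : ℝ) (hs : s ≠ 0) (hd : s ^ 2 = d) :
    (P * d * s - Q * (c / (2 * s))) / s ^ 2 = P * s - Q * c / (2 * s ^ 3) := by
  subst hd; field_simp

lemma alg2 (P Q c e m d s : ℝ) (hs : s ≠ 0) (hd : s ^ 2 = d) :
    m / 4 * Q * d * s + P * (c / (2 * s)) -
      ((P * d * c + Q * e) * (2 * s ^ 3) -
        Q * c * (2 * (3 * s ^ 2 * (c / (2 * s))))) / (2 * s ^ 3) ^ 2 =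
    (d ^ 2 * m - 2 * (e / d - 3 / 2 * (c / d) ^ 2)) / 4 * (Q / s) := by
  subst hd; field_simp; ring

/-- Transformation of solutions of the Hill equation: if `ψ'' = (μ/4) ψ` and
`f` is smooth with `f' > 0`, then `φ(x) = f'(x)^{−1/2} ψ(f(x))` satisfies
`φ'' = (μ_f/4) φ` with `μ_f = f'² · (μ ∘ f) − 2 S(f)`. -/
theorem hill_pullback (μ : ℝ → ℝ) (hμ : Continuous μ) (ψ : ℝ → ℝ)
    (hψ : ContDiff ℝ 2 ψ) (hHill : ∀ x, deriv (deriv ψ) x = μ x / 4 * ψ x)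
    (f : ℝ → ℝ) (hf : ContDiff ℝ (⊤ : ℕ∞) f) (hf' : ∀ x, 0 < deriv f x) :
    ∀ x, deriv (deriv (fun y => ψ (f y) / Real.sqrt (deriv f y))) x =
      ((deriv f x) ^ 2 * μ (f x) - 2 * schwarzian f x) / 4 *
        (ψ (f x) / Real.sqrt (deriv f x)) := by
  have hfi : ContDiff ℝ ∞ f := hf.of_le (by simp)
  have hgC : ContDiff ℝ ∞ (deriv f) := (contDiff_infty_iff_deriv.mp hfi).2
  have hg1C : ContDiff ℝ ∞ (deriv (deriv f)) := (contDiff_infty_iff_deriv.mp hgC).2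
  have hψ2 : ContDiff ℝ (1 + 1) ψ := by exact_mod_cast hψ
  have hψ1C : ContDiff ℝ 1 (deriv ψ) := (contDiff_succ_iff_deriv.mp hψ2).2.2
  have Hf : ∀ x, HasDerivAt f (deriv f x) x :=
    fun x => ((contDiff_infty_iff_deriv.mp hfi).1 x).hasDerivAt
  have Hg : ∀ x, HasDerivAt (deriv f) (deriv (deriv f) x) x :=
    fun x => ((contDiff_infty_iff_deriv.mp hgC).1 x).hasDerivAt
  have Hg1 : ∀ x, HasDerivAt (deriv (deriv f)) (deriv (deriv (deriv f)) x) x :=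
    fun x => ((contDiff_infty_iff_deriv.mp hg1C).1 x).hasDerivAt
  have Hψ : ∀ x, HasDerivAt ψ (deriv ψ x) x :=
    fun x => (hψ.differentiable two_ne_zero x).hasDerivAt
  have Hψ1 : ∀ x, HasDerivAt (deriv ψ) (deriv (deriv ψ) x) x :=
    fun x => (hψ1C.differentiable one_ne_zero x).hasDerivAt
  have hgne : ∀ x, deriv f x ≠ 0 := fun x => (hf' x).ne'
  have hsq : ∀ x, Real.sqrt (deriv f x) ^ 2 = deriv f x :=
    fun x => Real.sq_sqrt (hf' x).le
  have hsne : ∀ x, Real.sqrt (deriv f x) ≠ 0 :=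
    fun x => (Real.sqrt_pos.mpr (hf' x)).ne'
  have Hs : ∀ x, HasDerivAt (fun y => Real.sqrt (deriv f y))
      (deriv (deriv f) x / (2 * Real.sqrt (deriv f x))) x :=
    fun x => (Hg x).sqrt (hgne x)
  have Hψf : ∀ x, HasDerivAt (fun y => ψ (f y)) (deriv ψ (f x) * deriv f x) x :=
    fun x => (Hψ (f x)).comp x (Hf x)
  have Hψ1f : ∀ x, HasDerivAt (fun y => deriv ψ (f y))
      (deriv (deriv ψ) (f x) * deriv f x) x :=
    fun x => (Hψ1 (f x)).comp x (Hf x)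
  -- the first derivative
  have HAd : ∀ x, HasDerivAt (fun y => ψ (f y) / Real.sqrt (deriv f y))
      (deriv ψ (f x) * Real.sqrt (deriv f x) -
        ψ (f x) * deriv (deriv f) x / (2 * Real.sqrt (deriv f x) ^ 3)) x := by
    intro x
    have h := (Hψf x).div (Hs x) (hsne x)
    rwa [alg1 (deriv ψ (f x)) (ψ (f x)) (deriv (deriv f) x) (deriv f x)
      (Real.sqrt (deriv f x)) (hsne x) (hsq x)] at h
  have hdφ : deriv (fun y => ψ (f y) / Real.sqrt (deriv f y)) =
      fun x => deriv ψ (f x) * Real.sqrt (deriv f x) -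
        ψ (f x) * deriv (deriv f) x / (2 * Real.sqrt (deriv f x) ^ 3) :=
    funext fun x => (HAd x).deriv
  intro x
  rw [hdφ]
  -- the second derivative
  have Hnum : HasDerivAt (fun y => ψ (f y) * deriv (deriv f) y)
      (deriv ψ (f x) * deriv f x * deriv (deriv f) x +
        ψ (f x) * deriv (deriv (deriv f)) x) x := (Hψf x).mul (Hg1 x)
  have Hden : HasDerivAt (fun y => 2 * Real.sqrt (deriv f y) ^ 3)
      (2 * (3 * Real.sqrt (deriv f x) ^ 2 *
        (deriv (deriv f) x / (2 * Real.sqrt (deriv f x))))) x := by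
    have h := ((Hs x).fun_pow 3).const_mul 2
    rw [show (3:ℝ) * Real.sqrt (deriv f x) ^ 2 =
      ((3:ℕ):ℝ) * Real.sqrt (deriv f x) ^ (3 - 1) by norm_num]
    exact h
  have hdenne : 2 * Real.sqrt (deriv f x) ^ 3 ≠ 0 :=
    mul_ne_zero two_ne_zero (pow_ne_zero 3 (hsne x))
  have HA : HasDerivAt (fun x => deriv ψ (f x) * Real.sqrt (deriv f x) -
      ψ (f x) * deriv (deriv f) x / (2 * Real.sqrt (deriv f x) ^ 3))
      (deriv (deriv ψ) (f x) * deriv f x * Real.sqrt (deriv f x) +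
        deriv ψ (f x) * (deriv (deriv f) x / (2 * Real.sqrt (deriv f x))) -
       ((deriv ψ (f x) * deriv f x * deriv (deriv f) x +
          ψ (f x) * deriv (deriv (deriv f)) x) * (2 * Real.sqrt (deriv f x) ^ 3) -
        ψ (f x) * deriv (deriv f) x * (2 * (3 * Real.sqrt (deriv f x) ^ 2 *
          (deriv (deriv f) x / (2 * Real.sqrt (deriv f x)))))) /
        (2 * Real.sqrt (deriv f x) ^ 3) ^ 2) x :=
    ((Hψ1f x).mul (Hs x)).sub (Hnum.div Hden hdenne)
  rw [HA.deriv, hHill (f x), schwarzian,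
    alg2 (deriv ψ (f x)) (ψ (f x)) (deriv (deriv f) x) (deriv (deriv (deriv f)) x)
      (μ (f x)) (deriv f x) (Real.sqrt (deriv f x)) (hsne x) (hsq x)]
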